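/- arXiv:2411.00790 — 6 statements merged into one kernel-verified Lean document; each statement's English description precedes it below -/
import Mathlib

section
/- Product entropic uncertainty principle (finite case): Let {τ_j}_{j=1}^n and {ω_k}_{k=1}^m be Parseval frames for a finite-dimensional Hilbert space H with ‖τ_j‖ ≤ 1 and ‖ω_k‖ ≤ 1 for all j, k. Let φ : (0,1] → (0,∞) be continuous, decreasing, and submultiplicative (φ(xy) ≤ φ(x)φ(y) for all x, y ∈ (0,1]). Then for every unit vector h with ⟨h, τ_j⟩ ≠ 0 and ⟨h, ω_k⟩ ≠ 0 for all j, k, the product S_{τ,φ}(h) · S_{ω,φ}(h) ≥ φ(((1 + max_{j,k} |⟨τ_j, ω_k⟩|)²)/4) ≥ 0, where S_{τ,φ}(h) = Σ_j |⟨h, τ_j⟩|² φ(|⟨h, τ_j⟩|²) and S_{ω,φ}(h) = Σ_k |⟨h, ω_k⟩|² φ(|⟨h, ω_k⟩|²). -/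
/-! Let `i` and `k` index the largest coefficients `a = |⟨h, τ_i⟩|²` and `b = |⟨h, ω_k⟩|²`.
The coefficients of a Parseval frame sum to `1` and `φ` is decreasing, so `S_{τ,φ}(h) ≥ φ(a)`
and `S_{ω,φ}(h) ≥ φ(b)`; submultiplicativity gives `S_{τ,φ}(h) S_{ω,φ}(h) ≥ φ(ab)`. Finally
`ab ≤ (1 + |⟨τ_i, ω_k⟩|)² / 4`: testing `h` against `w = ⟨τ_i, h⟩ τ_i + ⟨ω_k, h⟩ ω_k` shows
`a + b ≤ 1 + |⟨τ_i, ω_k⟩|`, and `ab ≤ ((a + b) / 2)²`. -/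

open Finset RCLike
open scoped InnerProductSpace ComplexConjugate

section Weights

variable {ι : Type*} [Fintype ι] {a : ι → ℝ}

lemma apply_le_one_of_sum_eq_one (ha : ∀ j, 0 ≤ a j) (hsum : ∑ j, a j = 1) (i : ι) :
    a i ≤ 1 :=
  hsum ▸ single_le_sum (fun j _ => ha j) (mem_univ i)

lemma mem_Ioc_of_forall_le_of_sum_eq_one (ha : ∀ j, 0 ≤ a j) (hsum : ∑ j, a j = 1)
    {i : ι} (hi : ∀ j, a j ≤ a i) : a i ∈ Set.Ioc 0 1 := by
  refine ⟨lt_of_not_ge fun hle => ?_, apply_le_one_of_sum_eq_one ha hsum i⟩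
  have : ∑ j, a j ≤ 0 := sum_nonpos fun j _ => (hi j).trans hle
  linarith

lemma exists_mem_Ioc_apply_le_sum_mul_apply (ha : ∀ j, 0 ≤ a j) (hsum : ∑ j, a j = 1)
    {φ : ℝ → ℝ} (hφ : AntitoneOn φ (Set.Ioc 0 1)) :
    ∃ i, a i ∈ Set.Ioc 0 1 ∧ φ (a i) ≤ ∑ j, a j * φ (a j) := by
  have : Nonempty ι :=
    univ_nonempty_iff.mp <| nonempty_of_sum_ne_zero (hsum ▸ one_ne_zero)
  obtain ⟨i, hi⟩ := Finite.exists_max a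
  have hai := mem_Ioc_of_forall_le_of_sum_eq_one ha hsum hi
  refine ⟨i, hai, ?_⟩
  calc φ (a i) = ∑ j, a j * φ (a i) := by rw [← sum_mul, hsum, one_mul]
    _ ≤ ∑ j, a j * φ (a j) := sum_le_sum fun j _ => by
      rcases (ha j).eq_or_lt with hzero | hpos
      · simp [← hzero]
      · have haj : a j ∈ Set.Ioc 0 1 := ⟨hpos, apply_le_one_of_sum_eq_one ha hsum j⟩
        exact mul_le_mul_of_nonneg_left (hφ haj hai (hi j)) hpos.le

end Weights

section InnerProduct

variable {𝕜 H : Type*} [RCLike 𝕜] [NormedAddCommGroup H] [InnerProductSpace 𝕜 H]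

lemma norm_smul_add_smul_sq_le {u v : H} (hu : ‖u‖ ≤ 1) (hv : ‖v‖ ≤ 1) (c d : 𝕜) :
    ‖c • u + d • v‖ ^ 2 ≤ (‖c‖ ^ 2 + ‖d‖ ^ 2) * (1 + ‖⟪u, v⟫_𝕜‖) := by
  have hcu : ‖c • u‖ ≤ ‖c‖ := by
    rw [norm_smul]; exact mul_le_of_le_one_right (norm_nonneg c) hu
  have hdv : ‖d • v‖ ≤ ‖d‖ := by
    rw [norm_smul]; exact mul_le_of_le_one_right (norm_nonneg d) hv
  have hcross : re ⟪c • u, d • v⟫_𝕜 ≤ ‖c‖ * ‖d‖ * ‖⟪u, v⟫_𝕜‖ := by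
    refine (re_le_norm _).trans_eq ?_
    rw [inner_smul_left, inner_smul_right, norm_mul, norm_mul, norm_conj, mul_assoc]
  have hamgm : 2 * ‖c‖ * ‖d‖ ≤ ‖c‖ ^ 2 + ‖d‖ ^ 2 := two_mul_le_add_sq _ _
  rw [norm_add_sq (𝕜 := 𝕜)]
  nlinarith [pow_le_pow_left₀ (norm_nonneg _) hcu 2, pow_le_pow_left₀ (norm_nonneg _) hdv 2,
    norm_nonneg ⟪u, v⟫_𝕜]

lemma sq_norm_inner_add_sq_norm_inner_le {h u v : H} (hh : ‖h‖ ≤ 1) (hu : ‖u‖ ≤ 1)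
    (hv : ‖v‖ ≤ 1) :
    ‖⟪h, u⟫_𝕜‖ ^ 2 + ‖⟪h, v⟫_𝕜‖ ^ 2 ≤ 1 + ‖⟪u, v⟫_𝕜‖ := by
  set s := ‖⟪h, u⟫_𝕜‖ ^ 2 + ‖⟪h, v⟫_𝕜‖ ^ 2
  set w : H := conj ⟪h, u⟫_𝕜 • u + conj ⟪h, v⟫_𝕜 • v
  have hs : 0 ≤ s := by positivity
  have hinner : ⟪h, w⟫_𝕜 = (s : 𝕜) := by
    simp only [w, s, inner_add_right, inner_smul_right, RCLike.conj_mul]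
    push_cast
    ring
  have hsw : s ≤ ‖w‖ := by
    have := norm_inner_le_norm (𝕜 := 𝕜) h w
    rw [hinner, norm_ofReal, abs_of_nonneg hs] at this
    exact this.trans (mul_le_of_le_one_left (norm_nonneg w) hh)
  have hw := norm_smul_add_smul_sq_le (𝕜 := 𝕜) hu hv (conj ⟪h, u⟫_𝕜) (conj ⟪h, v⟫_𝕜)
  rw [norm_conj, norm_conj] at hw
  nlinarith [pow_le_pow_left₀ hs hsw 2, norm_nonneg ⟪u, v⟫_𝕜]

lemma sq_norm_inner_mul_sq_norm_inner_le {h u v : H} (hh : ‖h‖ ≤ 1) (hu : ‖u‖ ≤ 1)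
    (hv : ‖v‖ ≤ 1) :
    ‖⟪h, u⟫_𝕜‖ ^ 2 * ‖⟪h, v⟫_𝕜‖ ^ 2 ≤ (1 + ‖⟪u, v⟫_𝕜‖) ^ 2 / 4 := by
  have hsum := sq_norm_inner_add_sq_norm_inner_le (𝕜 := 𝕜) hh hu hv
  nlinarith [sq_nonneg (‖⟪h, u⟫_𝕜‖ ^ 2 - ‖⟪h, v⟫_𝕜‖ ^ 2), sq_nonneg ‖⟪h, u⟫_𝕜‖,
    sq_nonneg ‖⟪h, v⟫_𝕜‖]

variable (𝕜) in
def IsParsevalFrame {ι : Type*} [Fintype ι] (τ : ι → H) : Prop :=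
  ∀ x : H, ‖x‖ ^ 2 = ∑ j, ‖⟪x, τ j⟫_𝕜‖ ^ 2

variable (𝕜) in
def frameEntropy {ι : Type*} [Fintype ι] (τ : ι → H) (φ : ℝ → ℝ) (h : H) : ℝ :=
  ∑ j, ‖⟪h, τ j⟫_𝕜‖ ^ 2 * φ (‖⟪h, τ j⟫_𝕜‖ ^ 2)

lemma IsParsevalFrame.exists_apply_le_frameEntropy {ι : Type*} [Fintype ι] {τ : ι → H}
    (hτ : IsParsevalFrame 𝕜 τ) {h : H} (hh : ‖h‖ = 1) {φ : ℝ → ℝ}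
    (hφ : AntitoneOn φ (Set.Ioc 0 1)) :
    ∃ i, ‖⟪h, τ i⟫_𝕜‖ ^ 2 ∈ Set.Ioc 0 1 ∧ φ (‖⟪h, τ i⟫_𝕜‖ ^ 2) ≤ frameEntropy 𝕜 τ φ h :=
  exists_mem_Ioc_apply_le_sum_mul_apply (fun _ => by positivity)
    (by rw [← hτ h, hh, one_pow]) hφ

end InnerProduct

theorem product_entropic_uncertainty_general {𝕜 H : Type*} [RCLike 𝕜] [NormedAddCommGroup H]
    [InnerProductSpace 𝕜 H]
    {n m : ℕ}
    (τ : Fin n → H) (ω : Fin m → H)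
    (hτ : ∀ x : H, ‖x‖ ^ 2 = ∑ j, ‖(inner 𝕜 x (τ j) : 𝕜)‖ ^ 2)
    (hω : ∀ x : H, ‖x‖ ^ 2 = ∑ k, ‖(inner 𝕜 x (ω k) : 𝕜)‖ ^ 2)
    (hτ1 : ∀ j, ‖τ j‖ ≤ 1) (hω1 : ∀ k, ‖ω k‖ ≤ 1)
    (φ : ℝ → ℝ)
    (hφpos : ∀ x ∈ Set.Ioc (0:ℝ) 1, 0 < φ x)
    (hφdec : ∀ x ∈ Set.Ioc (0:ℝ) 1, ∀ y ∈ Set.Ioc (0:ℝ) 1, x ≤ y → φ y ≤ φ x)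
    (hφsub : ∀ x ∈ Set.Ioc (0:ℝ) 1, ∀ y ∈ Set.Ioc (0:ℝ) 1, φ (x * y) ≤ φ x * φ y)
    (h : H) (hh : ‖h‖ = 1) :
    (∑ j, ‖(inner 𝕜 h (τ j) : 𝕜)‖ ^ 2 * φ (‖(inner 𝕜 h (τ j) : 𝕜)‖ ^ 2)) *
      (∑ k, ‖(inner 𝕜 h (ω k) : 𝕜)‖ ^ 2 * φ (‖(inner 𝕜 h (ω k) : 𝕜)‖ ^ 2)) ≥
      φ ((1 + ⨆ j, ⨆ k, ‖(inner 𝕜 (τ j) (ω k) : 𝕜)‖) ^ 2 / 4) ∧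
    φ ((1 + ⨆ j, ⨆ k, ‖(inner 𝕜 (τ j) (ω k) : 𝕜)‖) ^ 2 / 4) ≥ 0 := by
  set M := ⨆ j, ⨆ k, ‖⟪τ j, ω k⟫_𝕜‖
  obtain ⟨i, hi, hSτ⟩ := IsParsevalFrame.exists_apply_le_frameEntropy hτ hh hφdec
  obtain ⟨k, hk, hSω⟩ := IsParsevalFrame.exists_apply_le_frameEntropy hω hh hφdec
  have hinner_le_M : ‖⟪τ i, ω k⟫_𝕜‖ ≤ M :=
    le_ciSup_of_le (Set.finite_range _).bddAbove i <|
      le_ciSup (f := fun k => ‖⟪τ i, ω k⟫_𝕜‖) (Set.finite_range _).bddAbove k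
  have hM_le_one : M ≤ 1 := Real.iSup_le (fun j => Real.iSup_le (fun k =>
    (norm_inner_le_norm _ _).trans (mul_le_one₀ (hτ1 j) (norm_nonneg _) (hω1 k))) zero_le_one)
    zero_le_one
  have hM_nonneg : 0 ≤ M := (norm_nonneg _).trans hinner_le_M
  have hC : (1 + M) ^ 2 / 4 ∈ Set.Ioc 0 1 := ⟨by positivity, by nlinarith⟩
  have hprod : ‖⟪h, τ i⟫_𝕜‖ ^ 2 * ‖⟪h, ω k⟫_𝕜‖ ^ 2 ≤ (1 + M) ^ 2 / 4 :=
    (sq_norm_inner_mul_sq_norm_inner_le hh.le (hτ1 i) (hω1 k)).trans (by gcongr)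
  refine ⟨?_, (hφpos _ hC).le⟩
  calc φ ((1 + M) ^ 2 / 4)
      ≤ φ (‖⟪h, τ i⟫_𝕜‖ ^ 2 * ‖⟪h, ω k⟫_𝕜‖ ^ 2) :=
        hφdec _ ⟨mul_pos hi.1 hk.1, mul_le_one₀ hi.2 hk.1.le hk.2⟩ _ hC hprod
    _ ≤ φ (‖⟪h, τ i⟫_𝕜‖ ^ 2) * φ (‖⟪h, ω k⟫_𝕜‖ ^ 2) := hφsub _ hi _ hk
    _ ≤ frameEntropy 𝕜 τ φ h * frameEntropy 𝕜 ω φ h :=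
        mul_le_mul hSτ hSω (hφpos _ hk).le ((hφpos _ hi).le.trans hSτ)

theorem product_entropic_uncertainty {𝕜 H : Type*} [RCLike 𝕜] [NormedAddCommGroup H]
    [InnerProductSpace 𝕜 H] [FiniteDimensional 𝕜 H]
    {n m : ℕ} (hn : 0 < n) (hm : 0 < m)
    (τ : Fin n → H) (ω : Fin m → H)
    (hτ : ∀ x : H, ‖x‖ ^ 2 = ∑ j, ‖(inner 𝕜 x (τ j) : 𝕜)‖ ^ 2)
    (hω : ∀ x : H, ‖x‖ ^ 2 = ∑ k, ‖(inner 𝕜 x (ω k) : 𝕜)‖ ^ 2)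
    (hτ1 : ∀ j, ‖τ j‖ ≤ 1) (hω1 : ∀ k, ‖ω k‖ ≤ 1)
    (φ : ℝ → ℝ)
    (hφc : ContinuousOn φ (Set.Ioc 0 1))
    (hφpos : ∀ x ∈ Set.Ioc (0:ℝ) 1, 0 < φ x)
    (hφdec : ∀ x ∈ Set.Ioc (0:ℝ) 1, ∀ y ∈ Set.Ioc (0:ℝ) 1, x ≤ y → φ y ≤ φ x)
    (hφsub : ∀ x ∈ Set.Ioc (0:ℝ) 1, ∀ y ∈ Set.Ioc (0:ℝ) 1, φ (x * y) ≤ φ x * φ y)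
    (h : H) (hh : ‖h‖ = 1)
    (hhτ : ∀ j, (inner 𝕜 h (τ j) : 𝕜) ≠ 0) (hhω : ∀ k, (inner 𝕜 h (ω k) : 𝕜) ≠ 0) :
    (∑ j, ‖(inner 𝕜 h (τ j) : 𝕜)‖ ^ 2 * φ (‖(inner 𝕜 h (τ j) : 𝕜)‖ ^ 2)) *
      (∑ k, ‖(inner 𝕜 h (ω k) : 𝕜)‖ ^ 2 * φ (‖(inner 𝕜 h (ω k) : 𝕜)‖ ^ 2)) ≥
      φ ((1 + ⨆ j, ⨆ k, ‖(inner 𝕜 (τ j) (ω k) : 𝕜)‖) ^ 2 / 4) ∧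
    φ ((1 + ⨆ j, ⨆ k, ‖(inner 𝕜 (τ j) (ω k) : 𝕜)‖) ^ 2 / 4) ≥ 0 :=
  product_entropic_uncertainty_general τ ω hτ hω hτ1 hω1 φ hφpos hφdec hφsub h hh
end

section
/- For two 1-bounded Parseval frames {τ_j}_{j=1}^n and {ω_k}_{k=1}^m of a finite-dimensional Hilbert space H, and any unit vector h, one has for all j, k: |⟨h, τ_j⟩|² |⟨h, ω_k⟩|² ≤ ((1 + max_{j',k'} |⟨τ_{j'}, ω_{k'}⟩|)²)/4. -/
open scoped InnerProductSpace

theorem norm_inner_mul_norm_inner_le {𝕜 E : Type*} [RCLike 𝕜] [NormedAddCommGroup E]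
    [InnerProductSpace 𝕜 E] (u v h : E) :
    ‖⟪u, h⟫_𝕜‖ * ‖⟪h, v⟫_𝕜‖ ≤ ‖h‖ ^ 2 * (‖u‖ * ‖v‖ + ‖⟪u, v⟫_𝕜‖) / 2 := by
  rcases eq_or_ne h 0 with rfl | hh
  · simp
  have hpos : 0 < ‖h‖ ^ 2 := by positivity
  -- The reflection `2 Pₕ v - v` of `v` in the line `𝕜 ∙ h` has the norm of `v`, and pairing it
  -- with `u` isolates the product `⟪u, h⟫ ⟪h, v⟫`.
  have hrefl : ‖⟪u, (𝕜 ∙ h).reflection v⟫_𝕜‖ ≤ ‖u‖ * ‖v‖ := by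
    simpa using norm_inner_le_norm (𝕜 := 𝕜) u ((𝕜 ∙ h).reflection v)
  have key : (2 * ⟪u, h⟫_𝕜 * ⟪h, v⟫_𝕜) / ((‖h‖ : 𝕜) ^ 2) =
      ⟪u, (𝕜 ∙ h).reflection v⟫_𝕜 + ⟪u, v⟫_𝕜 := by
    rw [Submodule.reflection_singleton_apply, inner_sub_right, inner_smul_right_eq_smul,
      inner_smul_right]
    ring
  have hnorm : 2 * ‖⟪u, h⟫_𝕜‖ * ‖⟪h, v⟫_𝕜‖ / ‖h‖ ^ 2 ≤ ‖u‖ * ‖v‖ + ‖⟪u, v⟫_𝕜‖ := by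
    calc 2 * ‖⟪u, h⟫_𝕜‖ * ‖⟪h, v⟫_𝕜‖ / ‖h‖ ^ 2
        = ‖⟪u, (𝕜 ∙ h).reflection v⟫_𝕜 + ⟪u, v⟫_𝕜‖ := by
          rw [← key]; simp
      _ ≤ ‖u‖ * ‖v‖ + ‖⟪u, v⟫_𝕜‖ := (norm_add_le _ _).trans (by gcongr)
  rw [div_le_iff₀ hpos] at hnorm
  linarith

theorem coeff_product_bound_general {𝕜 H : Type*} [RCLike 𝕜] [NormedAddCommGroup H]
    [InnerProductSpace 𝕜 H] {n m : ℕ} (τ : Fin n → H) (ω : Fin m → H)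
    (hτ1 : ∀ j, ‖τ j‖ ≤ 1) (hω1 : ∀ k, ‖ω k‖ ≤ 1)
    (h : H) (hh : ‖h‖ = 1) (j : Fin n) (k : Fin m) :
    ‖(inner 𝕜 h (τ j) : 𝕜)‖ ^ 2 * ‖(inner 𝕜 h (ω k) : 𝕜)‖ ^ 2 ≤
      (1 + ⨆ j', ⨆ k', ‖(inner 𝕜 (τ j') (ω k') : 𝕜)‖) ^ 2 / 4 := by
  set M : ℝ := ⨆ j', ⨆ k', ‖⟪τ j', ω k'⟫_𝕜‖
  have hM : ‖⟪τ j, ω k⟫_𝕜‖ ≤ M := Finite.le_ciSup_of_le j (Finite.le_ciSup_of_le k le_rfl)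
  have hnorms : ‖τ j‖ * ‖ω k‖ ≤ 1 := mul_le_one₀ (hτ1 j) (norm_nonneg _) (hω1 k)
  have hbuzano := norm_inner_mul_norm_inner_le (𝕜 := 𝕜) (τ j) (ω k) h
  rw [hh, norm_inner_symm] at hbuzano
  have hprod : ‖⟪h, τ j⟫_𝕜‖ * ‖⟪h, ω k⟫_𝕜‖ ≤ (1 + M) / 2 := by linarith
  calc ‖⟪h, τ j⟫_𝕜‖ ^ 2 * ‖⟪h, ω k⟫_𝕜‖ ^ 2 = (‖⟪h, τ j⟫_𝕜‖ * ‖⟪h, ω k⟫_𝕜‖) ^ 2 := by ring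
    _ ≤ ((1 + M) / 2) ^ 2 := by gcongr
    _ = (1 + M) ^ 2 / 4 := by ring

theorem coeff_product_bound {𝕜 H : Type*} [RCLike 𝕜] [NormedAddCommGroup H]
    [InnerProductSpace 𝕜 H] [FiniteDimensional 𝕜 H]
    {n m : ℕ} (hn : 0 < n) (hm : 0 < m)
    (τ : Fin n → H) (ω : Fin m → H)
    (hτ : ∀ x : H, ‖x‖ ^ 2 = ∑ j, ‖(inner 𝕜 x (τ j) : 𝕜)‖ ^ 2)
    (hω : ∀ x : H, ‖x‖ ^ 2 = ∑ k, ‖(inner 𝕜 x (ω k) : 𝕜)‖ ^ 2)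
    (hτ1 : ∀ j, ‖τ j‖ ≤ 1) (hω1 : ∀ k, ‖ω k‖ ≤ 1)
    (h : H) (hh : ‖h‖ = 1) (j : Fin n) (k : Fin m) :
    ‖(inner 𝕜 h (τ j) : 𝕜)‖ ^ 2 * ‖(inner 𝕜 h (ω k) : 𝕜)‖ ^ 2 ≤
      (1 + ⨆ j', ⨆ k', ‖(inner 𝕜 (τ j') (ω k') : 𝕜)‖) ^ 2 / 4 :=
  coeff_product_bound_general τ ω hτ1 hω1 h hh j k
end

section
/- Deutsch entropic uncertainty principle: Let {τ_j}_{j=1}^n and {ω_j}_{j=1}^n be two orthonormal bases of a finite-dimensional Hilbert space H. Then for every unit vector h with ⟨h, τ_j⟩ ≠ 0 and ⟨h, ω_j⟩ ≠ 0 for all j, S_τ(h) + S_ω(h) ≥ -2 log((1 + max_{j,k} |⟨τ_j, ω_k⟩|)/2) ≥ 0, where S_τ(h) = Σ_j |⟨h, τ_j⟩|² log(1/|⟨h, τ_j⟩|²). -/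
/-!
Writing `a j = ‖⟪h, τ j⟫‖²` and `b k = ‖⟪h, ω k⟫‖²`, both are probability vectors by Parseval,
and the entropy sum `S_τ(h) + S_ω(h)` is the entropy of the product distribution `a j * b k`.
Buzano's inequality bounds every `a j * b k` by `c²` with `c = (1 + max |⟪τ j, ω k⟫|) / 2`,
and a distribution whose weights are all at most `c²` has entropy at least `-log c² = -2 log c`.
-/

section Buzano

variable {𝕜 E : Type*} [RCLike 𝕜] [NormedAddCommGroup E] [InnerProductSpace 𝕜 E]

theorem norm_inner_mul_norm_inner_le_buzano (x u v : E) :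
    ‖(inner 𝕜 x u : 𝕜)‖ * ‖(inner 𝕜 x v : 𝕜)‖ ≤
      ‖x‖ ^ 2 / 2 * (‖u‖ * ‖v‖ + ‖(inner 𝕜 u v : 𝕜)‖) := by
  set r : ℝ := ‖x‖ ^ 2 / 2
  set p : E := (inner 𝕜 x u : 𝕜) • x
  -- `p` is `‖x‖²` times the orthogonal projection of `u` onto `x`, so (Thales) it lies at
  -- distance `r ‖u‖` from the midpoint `r • u` of `0` and `‖x‖² • u`.
  have hr : ‖(r : 𝕜)‖ = r := by rw [RCLike.norm_ofReal, abs_of_nonneg (by positivity)]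
  have hdist : ‖p - (r : 𝕜) • u‖ = r * ‖u‖ := by
    have hre : RCLike.re (inner 𝕜 p ((r : 𝕜) • u) : 𝕜) = r * ‖(inner 𝕜 x u : 𝕜)‖ ^ 2 := by
      rw [inner_smul_right, inner_smul_left, RCLike.conj_mul, ← RCLike.ofReal_pow,
        ← RCLike.ofReal_mul, RCLike.ofReal_re]
    have hsq : ‖p - (r : 𝕜) • u‖ ^ 2 = (r * ‖u‖) ^ 2 := by
      rw [@norm_sub_sq 𝕜, hre, norm_smul, norm_smul, hr]
      ring
    exact (pow_left_inj₀ (norm_nonneg _) (by positivity) two_ne_zero).mp hsq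
  calc ‖(inner 𝕜 x u : 𝕜)‖ * ‖(inner 𝕜 x v : 𝕜)‖ = ‖(inner 𝕜 p v : 𝕜)‖ := by
        rw [inner_smul_left, norm_mul, RCLike.norm_conj]
    _ = ‖(inner 𝕜 (p - (r : 𝕜) • u) v : 𝕜) + (inner 𝕜 ((r : 𝕜) • u) v : 𝕜)‖ := by
        rw [← inner_add_left, sub_add_cancel]
    _ ≤ ‖p - (r : 𝕜) • u‖ * ‖v‖ + ‖(inner 𝕜 ((r : 𝕜) • u) v : 𝕜)‖ :=
        (norm_add_le _ _).trans (add_le_add_left (norm_inner_le_norm _ _) _)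
    _ = r * (‖u‖ * ‖v‖ + ‖(inner 𝕜 u v : 𝕜)‖) := by
        rw [hdist, inner_smul_left, norm_mul, RCLike.norm_conj, hr]
        ring

end Buzano

namespace Real

lemma mul_log_one_div (x : ℝ) : x * log (1 / x) = negMulLog x := by
  rw [one_div, log_inv, negMulLog]
  ring

lemma neg_log_le_sum_negMulLog {ι : Type*} [Fintype ι] {p : ι → ℝ} {C : ℝ}
    (hp0 : ∀ i, 0 ≤ p i) (hp1 : ∑ i, p i = 1) (hpC : ∀ i, p i ≤ C) :
    -log C ≤ ∑ i, negMulLog (p i) := by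
  have hterm : ∀ i, p i * -log C ≤ negMulLog (p i) := fun i => by
    rcases (hp0 i).eq_or_lt with hi | hi
    · simp [← hi]
    · rw [negMulLog, neg_mul, ← mul_neg]
      exact mul_le_mul_of_nonneg_left (neg_le_neg (log_le_log hi (hpC i))) hi.le
  calc -log C = ∑ i, p i * -log C := by rw [← Finset.sum_mul, hp1, one_mul]
    _ ≤ ∑ i, negMulLog (p i) := Finset.sum_le_sum fun i _ => hterm i

lemma sum_negMulLog_mul {ι κ : Type*} [Fintype ι] [Fintype κ] {a : ι → ℝ} {b : κ → ℝ}
    (ha : ∑ j, a j = 1) (hb : ∑ k, b k = 1) :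
    ∑ j, ∑ k, negMulLog (a j * b k) = ∑ j, negMulLog (a j) + ∑ k, negMulLog (b k) := by
  simp only [negMulLog_mul, Finset.sum_add_distrib, ← Finset.sum_mul, ← Finset.mul_sum, hb, ha,
    one_mul]

lemma neg_log_le_sum_negMulLog_add_sum_negMulLog {ι κ : Type*} [Fintype ι] [Fintype κ]
    {a : ι → ℝ} {b : κ → ℝ} {C : ℝ} (ha0 : ∀ j, 0 ≤ a j) (hb0 : ∀ k, 0 ≤ b k)
    (ha : ∑ j, a j = 1) (hb : ∑ k, b k = 1) (habC : ∀ j k, a j * b k ≤ C) :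
    -log C ≤ ∑ j, negMulLog (a j) + ∑ k, negMulLog (b k) := by
  rw [← sum_negMulLog_mul ha hb, ← Fintype.sum_prod_type']
  refine neg_log_le_sum_negMulLog (fun jk => mul_nonneg (ha0 jk.1) (hb0 jk.2)) ?_
    fun jk => habC jk.1 jk.2
  rw [Fintype.sum_prod_type, ← Fintype.sum_mul_sum, ha, hb, one_mul]

end Real

theorem deutsch_uncertainty_general {𝕜 H : Type*} [RCLike 𝕜] [NormedAddCommGroup H]
    [InnerProductSpace 𝕜 H]
    {n : ℕ}
    (τ : OrthonormalBasis (Fin n) 𝕜 H) (ω : OrthonormalBasis (Fin n) 𝕜 H)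
    (h : H) (hh : ‖h‖ = 1) :
    (∑ j, ‖(inner 𝕜 h (τ j) : 𝕜)‖ ^ 2 * Real.log (1 / ‖(inner 𝕜 h (τ j) : 𝕜)‖ ^ 2)) +
      (∑ j, ‖(inner 𝕜 h (ω j) : 𝕜)‖ ^ 2 * Real.log (1 / ‖(inner 𝕜 h (ω j) : 𝕜)‖ ^ 2)) ≥
      -2 * Real.log ((1 + ⨆ j, ⨆ k, ‖(inner 𝕜 (τ j) (ω k) : 𝕜)‖) / 2) ∧
    -2 * Real.log ((1 + ⨆ j, ⨆ k, ‖(inner 𝕜 (τ j) (ω k) : 𝕜)‖) / 2) ≥ 0 := by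
  set M := ⨆ j, ⨆ k, ‖(inner 𝕜 (τ j) (ω k) : 𝕜)‖
  have hle_M : ∀ j k, ‖(inner 𝕜 (τ j) (ω k) : 𝕜)‖ ≤ M := fun j k =>
    le_ciSup_of_le (Finite.bddAbove_range _) j
      (le_ciSup (f := fun k => ‖(inner 𝕜 (τ j) (ω k) : 𝕜)‖) (Finite.bddAbove_range _) k)
  have hM0 : 0 ≤ M := Real.iSup_nonneg fun _ => Real.iSup_nonneg fun _ => norm_nonneg _
  have hM1 : M ≤ 1 := Real.iSup_le (fun j => Real.iSup_le (fun k =>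
    (norm_inner_le_norm _ _).trans_eq (by rw [τ.orthonormal.1 j, ω.orthonormal.1 k, one_mul]))
    zero_le_one) zero_le_one
  have hprod : ∀ j k, ‖(inner 𝕜 h (τ j) : 𝕜)‖ ^ 2 * ‖(inner 𝕜 h (ω k) : 𝕜)‖ ^ 2 ≤
      ((1 + M) / 2) ^ 2 := fun j k => by
    rw [← mul_pow]
    refine pow_le_pow_left₀ (by positivity) ?_ 2
    have := norm_inner_mul_norm_inner_le_buzano (𝕜 := 𝕜) h (τ j) (ω k)
    rw [hh, τ.orthonormal.1 j, ω.orthonormal.1 k] at this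
    linarith [hle_M j k]
  have hentropy := Real.neg_log_le_sum_negMulLog_add_sum_negMulLog (fun _ => by positivity)
    (fun _ => by positivity) (by rw [τ.sum_sq_norm_inner_left, hh, one_pow])
    (by rw [ω.sum_sq_norm_inner_left, hh, one_pow]) hprod
  rw [Real.log_pow, Nat.cast_ofNat] at hentropy
  simp only [Real.mul_log_one_div]
  exact ⟨by linarith, by linarith [Real.log_nonpos (by linarith) (by linarith : (1 + M) / 2 ≤ 1)]⟩

theorem deutsch_uncertainty {𝕜 H : Type*} [RCLike 𝕜] [NormedAddCommGroup H]
    [InnerProductSpace 𝕜 H] [FiniteDimensional 𝕜 H]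
    {n : ℕ} (hn : 0 < n)
    (τ : OrthonormalBasis (Fin n) 𝕜 H) (ω : OrthonormalBasis (Fin n) 𝕜 H)
    (h : H) (hh : ‖h‖ = 1)
    (hhτ : ∀ j, (inner 𝕜 h (τ j) : 𝕜) ≠ 0) (hhω : ∀ j, (inner 𝕜 h (ω j) : 𝕜) ≠ 0) :
    (∑ j, ‖(inner 𝕜 h (τ j) : 𝕜)‖ ^ 2 * Real.log (1 / ‖(inner 𝕜 h (τ j) : 𝕜)‖ ^ 2)) +
      (∑ j, ‖(inner 𝕜 h (ω j) : 𝕜)‖ ^ 2 * Real.log (1 / ‖(inner 𝕜 h (ω j) : 𝕜)‖ ^ 2)) ≥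
      -2 * Real.log ((1 + ⨆ j, ⨆ k, ‖(inner 𝕜 (τ j) (ω k) : 𝕜)‖) / 2) ∧
    -2 * Real.log ((1 + ⨆ j, ⨆ k, ‖(inner 𝕜 (τ j) (ω k) : 𝕜)‖) / 2) ≥ 0 :=
  deutsch_uncertainty_general τ ω h hh
end

section
/- The function φ(x) = x^{-p} for fixed p > 0 on (0,1] is continuous, decreasing, submultiplicative (in fact φ(xy) = φ(x)φ(y)), and takes values in (0,∞); hence for two 1-bounded Parseval frames {τ_j}_{j=1}^n, {ω_k}_{k=1}^m of a finite-dimensional Hilbert space H and any unit vector h with all frame coefficients nonzero, (Σ_j |⟨h,τ_j⟩|^{2(1-p)}) · (Σ_k |⟨h,ω_k⟩|^{2(1-p)}) ≥ (4/(1 + max_{j,k}|⟨τ_j,ω_k⟩|)²)^p. -/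
/-! With `c_j = |⟨h, τ_j⟩|`, `d_k = |⟨h, ω_k⟩|` and `t = (1 + max |⟨τ_j, ω_k⟩|) / 2`, every product
satisfies `c_j d_k ≤ t`. Writing `x^{2(1-p)} = x² · x^{-2p}`, the product of the two entropies is
`∑_{j,k} c_j² d_k² (c_j d_k)^{-2p} ≥ t^{-2p} ∑_{j,k} c_j² d_k² = t^{-2p}`, the weights summing to 1
by the Parseval identity for `h`. -/

open Finset

section InnerBounds

variable {𝕜 H : Type*} [RCLike 𝕜] [NormedAddCommGroup H] [InnerProductSpace 𝕜 H]

/- Testing `h` against `v = conj ⟪h, τ⟫ • τ + conj ⟪h, ω⟫ • ω` gives `s ≤ ‖v‖` for `s` the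
left-hand side, while expanding `‖v‖²` gives `‖v‖² ≤ s (1 + ‖⟪τ, ω⟫‖)`. -/
theorem norm_inner_sq_add_norm_inner_sq_le {h τ ω : H} (hh : ‖h‖ ≤ 1) (hτ : ‖τ‖ ≤ 1)
    (hω : ‖ω‖ ≤ 1) :
    ‖(inner 𝕜 h τ : 𝕜)‖ ^ 2 + ‖(inner 𝕜 h ω : 𝕜)‖ ^ 2 ≤ 1 + ‖(inner 𝕜 τ ω : 𝕜)‖ := by
  set a : 𝕜 := inner 𝕜 h τ with ha
  set b : 𝕜 := inner 𝕜 h ω with hb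
  set δ : ℝ := ‖(inner 𝕜 τ ω : 𝕜)‖
  set s : ℝ := ‖a‖ ^ 2 + ‖b‖ ^ 2
  set v : H := (starRingEnd 𝕜 a) • τ + (starRingEnd 𝕜 b) • ω
  have hs : 0 ≤ s := by positivity
  have hinner : (inner 𝕜 h v : 𝕜) = s := by
    rw [inner_add_right, inner_smul_right, inner_smul_right, ← ha, ← hb, RCLike.conj_mul,
      RCLike.conj_mul]
    push_cast [s]
    rfl
  have hs_le : s ≤ ‖v‖ := calc
    s = ‖(inner 𝕜 h v : 𝕜)‖ := by rw [hinner, RCLike.norm_ofReal, abs_of_nonneg hs]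
    _ ≤ ‖h‖ * ‖v‖ := norm_inner_le_norm h v
    _ ≤ ‖v‖ := mul_le_of_le_one_left (norm_nonneg v) hh
  have hcross : RCLike.re (inner 𝕜 ((starRingEnd 𝕜 a) • τ) ((starRingEnd 𝕜 b) • ω) : 𝕜)
      ≤ ‖a‖ * ‖b‖ * δ := calc
    _ ≤ ‖(inner 𝕜 ((starRingEnd 𝕜 a) • τ) ((starRingEnd 𝕜 b) • ω) : 𝕜)‖ := RCLike.re_le_norm _
    _ = ‖a‖ * ‖b‖ * δ := by
      simp only [inner_smul_left, inner_smul_right, norm_mul, RCLike.conj_conj, RCLike.norm_conj]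
      ring
  have hv_sq : ‖v‖ ^ 2 ≤ s * (1 + δ) := by
    have hτa : ‖(starRingEnd 𝕜 a) • τ‖ ≤ ‖a‖ := by
      rw [norm_smul, RCLike.norm_conj]; exact mul_le_of_le_one_right (norm_nonneg a) hτ
    have hωb : ‖(starRingEnd 𝕜 b) • ω‖ ≤ ‖b‖ := by
      rw [norm_smul, RCLike.norm_conj]; exact mul_le_of_le_one_right (norm_nonneg b) hω
    rw [norm_add_sq (𝕜 := 𝕜)]
    nlinarith [sq_nonneg (‖a‖ - ‖b‖), norm_nonneg ((starRingEnd 𝕜 a) • τ),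
      norm_nonneg ((starRingEnd 𝕜 b) • ω), norm_nonneg (inner 𝕜 τ ω : 𝕜)]
  nlinarith [norm_nonneg (inner 𝕜 τ ω : 𝕜)]

theorem norm_inner_mul_norm_inner_le_s7 {h τ ω : H} (hh : ‖h‖ ≤ 1) (hτ : ‖τ‖ ≤ 1)
    (hω : ‖ω‖ ≤ 1) :
    ‖(inner 𝕜 h τ : 𝕜)‖ * ‖(inner 𝕜 h ω : 𝕜)‖ ≤ (1 + ‖(inner 𝕜 τ ω : 𝕜)‖) / 2 := by
  have := norm_inner_sq_add_norm_inner_sq_le (𝕜 := 𝕜) hh hτ hω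
  nlinarith [two_mul_le_add_sq ‖(inner 𝕜 h τ : 𝕜)‖ ‖(inner 𝕜 h ω : 𝕜)‖]

end InnerBounds

theorem sq_mul_rpow_neg_le_rpow {x t p : ℝ} (hx : 0 < x) (hxt : x ≤ t) (hp : 0 ≤ p) :
    x ^ 2 * t ^ (-(2 * p)) ≤ x ^ (2 * (1 - p)) := by
  have hsplit : x ^ (2 * (1 - p)) = x ^ 2 * x ^ (-(2 * p)) := by
    rw [← Real.rpow_two, ← Real.rpow_add hx]; ring_nf
  rw [hsplit]
  exact mul_le_mul_of_nonneg_left (Real.rpow_le_rpow_of_nonpos hx hxt (by linarith)) (sq_nonneg x)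

theorem rpow_neg_two_mul_eq_inv_sq_rpow {t : ℝ} (ht : 0 ≤ t) (p : ℝ) :
    t ^ (-(2 * p)) = ((t ^ 2)⁻¹) ^ p := by
  rw [Real.rpow_neg ht, Real.rpow_mul ht, Real.rpow_two, Real.inv_rpow (by positivity)]

theorem power_function_product_uncertainty_general {𝕜 H : Type*} [RCLike 𝕜] [NormedAddCommGroup H]
    [InnerProductSpace 𝕜 H]
    {p : ℝ} (hp : 0 < p)
    {n m : ℕ}
    (τ : Fin n → H) (ω : Fin m → H)
    (hτ : ∀ x : H, ‖x‖ ^ 2 = ∑ j, ‖(inner 𝕜 x (τ j) : 𝕜)‖ ^ 2)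
    (hω : ∀ x : H, ‖x‖ ^ 2 = ∑ k, ‖(inner 𝕜 x (ω k) : 𝕜)‖ ^ 2)
    (hτ1 : ∀ j, ‖τ j‖ ≤ 1) (hω1 : ∀ k, ‖ω k‖ ≤ 1)
    (h : H) (hh : ‖h‖ = 1)
    (hhτ : ∀ j, (inner 𝕜 h (τ j) : 𝕜) ≠ 0) (hhω : ∀ k, (inner 𝕜 h (ω k) : 𝕜) ≠ 0) :
    (ContinuousOn (fun x : ℝ => x ^ (-p)) (Set.Ioc 0 1) ∧
      (∀ x ∈ Set.Ioc (0:ℝ) 1, ∀ y ∈ Set.Ioc (0:ℝ) 1, x ≤ y → y ^ (-p) ≤ x ^ (-p)) ∧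
      (∀ x ∈ Set.Ioc (0:ℝ) 1, ∀ y ∈ Set.Ioc (0:ℝ) 1, (x * y) ^ (-p) = x ^ (-p) * y ^ (-p)) ∧
      (∀ x ∈ Set.Ioc (0:ℝ) 1, 0 < x ^ (-p))) ∧
    (∑ j, ‖(inner 𝕜 h (τ j) : 𝕜)‖ ^ (2 * (1 - p))) *
      (∑ k, ‖(inner 𝕜 h (ω k) : 𝕜)‖ ^ (2 * (1 - p))) ≥
      (4 / (1 + ⨆ j, ⨆ k, ‖(inner 𝕜 (τ j) (ω k) : 𝕜)‖) ^ 2) ^ p := by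
  refine ⟨⟨?_, ?_, ?_, ?_⟩, ?_⟩
  · exact fun x hx => (Real.continuousAt_rpow_const x (-p) (.inl hx.1.ne')).continuousWithinAt
  · exact fun x hx y _ hxy => Real.rpow_le_rpow_of_nonpos hx.1 hxy (by linarith)
  · exact fun x hx y hy => Real.mul_rpow hx.1.le hy.1.le
  · exact fun x hx => Real.rpow_pos_of_pos hx.1 _
  set c : Fin n → ℝ := fun j => ‖(inner 𝕜 h (τ j) : 𝕜)‖
  set d : Fin m → ℝ := fun k => ‖(inner 𝕜 h (ω k) : 𝕜)‖
  set ε := ⨆ j, ⨆ k, ‖(inner 𝕜 (τ j) (ω k) : 𝕜)‖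
  have hε : 0 ≤ ε := Real.iSup_nonneg fun j => Real.iSup_nonneg fun k => norm_nonneg _
  have hcd : ∀ j k, c j * d k ≤ (1 + ε) / 2 := fun j k =>
    (norm_inner_mul_norm_inner_le_s7 hh.le (hτ1 j) (hω1 k)).trans <| by
      gcongr
      exact le_ciSup_of_le (Finite.bddAbove_range _) j
        (le_ciSup (f := fun k => ‖(inner 𝕜 (τ j) (ω k) : 𝕜)‖) (Finite.bddAbove_range _) k)
  have hc0 : ∀ j, 0 < c j := fun j => norm_pos_iff.mpr (hhτ j)
  have hd0 : ∀ k, 0 < d k := fun k => norm_pos_iff.mpr (hhω k)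
  have hc : ∑ j, c j ^ 2 = 1 := by rw [← hτ h, hh, one_pow]
  have hd : ∑ k, d k ^ 2 = 1 := by rw [← hω h, hh, one_pow]
  calc (4 / (1 + ε) ^ 2) ^ p = ((1 + ε) / 2) ^ (-(2 * p)) := by
        rw [rpow_neg_two_mul_eq_inv_sq_rpow (by positivity), div_pow, inv_div]
        norm_num
    _ = (∑ j, c j ^ 2) * (∑ k, d k ^ 2) * ((1 + ε) / 2) ^ (-(2 * p)) := by
        rw [hc, hd, one_mul, one_mul]
    _ = ∑ j, ∑ k, (c j * d k) ^ 2 * ((1 + ε) / 2) ^ (-(2 * p)) := by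
        simp_rw [sum_mul_sum, sum_mul, mul_pow]
    _ ≤ ∑ j, ∑ k, (c j * d k) ^ (2 * (1 - p)) :=
        sum_le_sum fun j _ => sum_le_sum fun k _ => sq_mul_rpow_neg_le_rpow
          (mul_pos (hc0 j) (hd0 k)) (hcd j k) hp.le
    _ = (∑ j, c j ^ (2 * (1 - p))) * ∑ k, d k ^ (2 * (1 - p)) := by
        rw [sum_mul_sum]
        exact sum_congr rfl fun j _ => sum_congr rfl fun k _ =>
          Real.mul_rpow (hc0 j).le (hd0 k).le

theorem power_function_product_uncertainty {𝕜 H : Type*} [RCLike 𝕜] [NormedAddCommGroup H]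
    [InnerProductSpace 𝕜 H] [FiniteDimensional 𝕜 H]
    {p : ℝ} (hp : 0 < p)
    {n m : ℕ} (hn : 0 < n) (hm : 0 < m)
    (τ : Fin n → H) (ω : Fin m → H)
    (hτ : ∀ x : H, ‖x‖ ^ 2 = ∑ j, ‖(inner 𝕜 x (τ j) : 𝕜)‖ ^ 2)
    (hω : ∀ x : H, ‖x‖ ^ 2 = ∑ k, ‖(inner 𝕜 x (ω k) : 𝕜)‖ ^ 2)
    (hτ1 : ∀ j, ‖τ j‖ ≤ 1) (hω1 : ∀ k, ‖ω k‖ ≤ 1)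
    (h : H) (hh : ‖h‖ = 1)
    (hhτ : ∀ j, (inner 𝕜 h (τ j) : 𝕜) ≠ 0) (hhω : ∀ k, (inner 𝕜 h (ω k) : 𝕜) ≠ 0) :
    (ContinuousOn (fun x : ℝ => x ^ (-p)) (Set.Ioc 0 1) ∧
      (∀ x ∈ Set.Ioc (0:ℝ) 1, ∀ y ∈ Set.Ioc (0:ℝ) 1, x ≤ y → y ^ (-p) ≤ x ^ (-p)) ∧
      (∀ x ∈ Set.Ioc (0:ℝ) 1, ∀ y ∈ Set.Ioc (0:ℝ) 1, (x * y) ^ (-p) = x ^ (-p) * y ^ (-p)) ∧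
      (∀ x ∈ Set.Ioc (0:ℝ) 1, 0 < x ^ (-p))) ∧
    (∑ j, ‖(inner 𝕜 h (τ j) : 𝕜)‖ ^ (2 * (1 - p))) *
      (∑ k, ‖(inner 𝕜 h (ω k) : 𝕜)‖ ^ (2 * (1 - p))) ≥
      (4 / (1 + ⨆ j, ⨆ k, ‖(inner 𝕜 (τ j) (ω k) : 𝕜)‖) ^ 2) ^ p :=
  power_function_product_uncertainty_general hp τ ω hτ hω hτ1 hω1 h hh hhτ hhω
end

section
/- Maassen–Uffink entropic uncertainty principle: Let {τ_j}_{j=1}^n and {ω_k}_{k=1}^n be two orthonormal bases of an n-dimensional Hilbert space H. Then for every unit vector h with all ⟨h, τ_j⟩ and ⟨h, ω_k⟩ nonzero, S_τ(h) + S_ω(h) ≥ -2 log(max_{j,k} |⟨τ_j, ω_k⟩|), where S_τ(h) = Σ_j |⟨h, τ_j⟩|² log(1/|⟨h, τ_j⟩|²). -/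
/-!
The change-of-basis matrix `U = (⟪ω k, τ j⟫)` is unitary, so it is an isometry of `ℓ²`, and its
entries are bounded by `c`, so it maps `ℓ¹` to `ℓ^∞` with norm at most `c`. Hadamard's three lines
theorem applied to `w ↦ ⟨d^[w], U x^[w]⟩`, where `x^[w]` keeps the phases of `x` and raises the
moduli to the power `w`, interpolates these two bounds to `‖U x‖_q ≤ c ^ (2 / p - 1) ‖x‖_p` for
`1 < p ≤ 2` and `q` the conjugate exponent (Riesz–Thorin). For a unit vector both sides equal `1`
at `p = 2`, so the derivatives in `p` of their logarithms at `p = 2` compare as well; since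
`d/dp log ‖x‖_p = -S(x) / 4` there, this is the entropic inequality.
-/

open Finset Matrix Complex Filter Topology
open scoped InnerProductSpace

-- Hadamard's three lines theorem needs complex scalars.
noncomputable def RCLike.toComplexHom (𝕜 : Type*) [RCLike 𝕜] : 𝕜 →+* ℂ where
  toFun x := ⟨RCLike.re x, RCLike.im x⟩
  map_one' := by simp [Complex.ext_iff]
  map_mul' x y := by simp [Complex.ext_iff, RCLike.mul_re, RCLike.mul_im]
  map_zero' := by simp [Complex.ext_iff]
  map_add' x y := by simp [Complex.ext_iff]

namespace RCLike

variable {𝕜 : Type*} [RCLike 𝕜]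

@[simp]
lemma norm_toComplexHom (x : 𝕜) : ‖toComplexHom 𝕜 x‖ = ‖x‖ := by
  rw [← sq_eq_sq₀ (norm_nonneg _) (norm_nonneg _), Complex.sq_norm, norm_sq_eq_def]
  rfl

lemma toComplexHom_star (x : 𝕜) : toComplexHom 𝕜 (star x) = star (toComplexHom 𝕜 x) := by
  simp [toComplexHom, Complex.ext_iff]

end RCLike

namespace Matrix

variable {𝕜 ι : Type*} [RCLike 𝕜] [Fintype ι] [DecidableEq ι]

lemma map_toComplexHom_mem_unitaryGroup {U : Matrix ι ι 𝕜} (hU : U ∈ unitaryGroup ι 𝕜) :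
    U.map (RCLike.toComplexHom 𝕜) ∈ unitaryGroup ι ℂ := by
  rw [mem_unitaryGroup_iff', star_eq_conjTranspose,
    ← conjTranspose_map _ fun x => RCLike.toComplexHom_star x, ← Matrix.map_mul,
    ← star_eq_conjTranspose, (mem_unitaryGroup_iff').1 hU,
    Matrix.map_one _ (map_zero _) (map_one _)]

lemma sum_norm_sq_mulVec_of_mem_unitaryGroup {U : Matrix ι ι 𝕜} (hU : U ∈ unitaryGroup ι 𝕜)
    (x : ι → 𝕜) : ∑ i, ‖(U *ᵥ x) i‖ ^ 2 = ∑ i, ‖x i‖ ^ 2 := by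
  have hdot : ∀ v : ι → 𝕜, star v ⬝ᵥ v = ((∑ i, ‖v i‖ ^ 2 : ℝ) : 𝕜) := fun v => by
    simp [dotProduct, RCLike.conj_mul]
  have h := hdot (U *ᵥ x)
  rw [star_mulVec, dotProduct_mulVec, vecMul_vecMul, ← star_eq_conjTranspose,
    (mem_unitaryGroup_iff').1 hU, vecMul_one, hdot] at h
  exact_mod_cast h.symm

end Matrix

-- At `x = 0` this is `0`, because `0 / 0 = 0`.
noncomputable def Complex.phasePow (x w : ℂ) : ℂ := x / ‖x‖ * exp (w * Real.log ‖x‖)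

namespace Complex

lemma phasePow_one (x : ℂ) : phasePow x 1 = x := by
  rcases eq_or_ne x 0 with rfl | hx
  · simp [phasePow]
  · rw [phasePow, one_mul, ← ofReal_exp, Real.exp_log (norm_pos_iff.2 hx),
      div_mul_cancel₀ _ (ofReal_ne_zero.2 (norm_ne_zero_iff.2 hx))]

lemma norm_phasePow (x : ℂ) {w : ℂ} (hw : w.re ≠ 0) : ‖phasePow x w‖ = ‖x‖ ^ w.re := by
  rcases eq_or_ne x 0 with rfl | hx
  · simp [phasePow, Real.zero_rpow hw]
  · rw [phasePow, norm_mul, norm_div, norm_real, norm_norm, div_self (norm_ne_zero_iff.2 hx),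
      one_mul, norm_exp, re_mul_ofReal, Real.rpow_def_of_pos (norm_pos_iff.2 hx), mul_comm]

@[fun_prop]
lemma differentiable_phasePow (x : ℂ) : Differentiable ℂ (phasePow x) := by
  unfold phasePow
  fun_prop

end Complex

lemma Real.rpow_le_rpow_add_rpow {r s l u : ℝ} (hr : 0 ≤ r) (hl : 0 ≤ l) (hls : l ≤ s)
    (hsu : s ≤ u) : r ^ s ≤ r ^ l + r ^ u := by
  rcases le_total r 1 with hr1 | hr1
  · linarith [Real.rpow_le_rpow_of_exponent_ge' hr hr1 hl hls, Real.rpow_nonneg hr u]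
  · linarith [Real.rpow_le_rpow_of_exponent_le hr1 hsu, Real.rpow_nonneg hr l]

namespace Matrix

open Complex.HadamardThreeLines

variable {ι : Type*} [Fintype ι]

lemma differentiable_phasePow_dotProduct_mulVec (U : Matrix ι ι ℂ) (x d : ι → ℂ) :
    Differentiable ℂ fun w => (fun k => phasePow (d k) w) ⬝ᵥ (U *ᵥ fun j => phasePow (x j) w) := by
  simp only [dotProduct, mulVec]
  fun_prop

lemma norm_phasePow_dotProduct_mulVec_le (U : Matrix ι ι ℂ) (x d : ι → ℂ) {w : ℂ}
    (hw : w.re ≠ 0) :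
    ‖(fun k => phasePow (d k) w) ⬝ᵥ (U *ᵥ fun j => phasePow (x j) w)‖ ≤
      ∑ k, ‖d k‖ ^ w.re * ∑ j, ‖U k j‖ * ‖x j‖ ^ w.re := by
  refine (norm_sum_le _ _).trans (sum_le_sum fun k _ => ?_)
  rw [norm_mul, norm_phasePow _ hw]
  gcongr
  refine (norm_sum_le _ _).trans_eq (sum_congr rfl fun j _ => ?_)
  rw [norm_mul, norm_phasePow _ hw]

lemma norm_phasePow_dotProduct_mulVec_le_mul_sum_mul_sum {U : Matrix ι ι ℂ} {c : ℝ}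
    (hUc : ∀ i j, ‖U i j‖ ≤ c) (x d : ι → ℂ) {w : ℂ} (hw : w.re ≠ 0) :
    ‖(fun k => phasePow (d k) w) ⬝ᵥ (U *ᵥ fun j => phasePow (x j) w)‖ ≤
      c * (∑ j, ‖x j‖ ^ w.re) * ∑ k, ‖d k‖ ^ w.re := by
  refine (norm_phasePow_dotProduct_mulVec_le U x d hw).trans ?_
  calc _ ≤ ∑ k, ‖d k‖ ^ w.re * ∑ j, c * ‖x j‖ ^ w.re := by gcongr; exact hUc _ _
    _ = _ := by simp only [← mul_sum, ← sum_mul]; ring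

lemma norm_phasePow_dotProduct_mulVec_le_sqrt_mul_sqrt [DecidableEq ι] {U : Matrix ι ι ℂ}
    (hU : U ∈ unitaryGroup ι ℂ) (x d : ι → ℂ) {w : ℂ} (hw : w.re ≠ 0) :
    ‖(fun k => phasePow (d k) w) ⬝ᵥ (U *ᵥ fun j => phasePow (x j) w)‖ ≤
      √(∑ k, ‖d k‖ ^ (2 * w.re)) * √(∑ j, ‖x j‖ ^ (2 * w.re)) := by
  have hsq : ∀ r : ℝ, 0 ≤ r → (r ^ w.re) ^ 2 = r ^ (2 * w.re) := fun r hr => by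
    rw [← Real.rpow_natCast, ← Real.rpow_mul hr, mul_comm]
    norm_num
  calc _ ≤ ∑ k, ‖phasePow (d k) w‖ * ‖(U *ᵥ fun j => phasePow (x j) w) k‖ :=
        (norm_sum_le _ _).trans_eq (by simp only [norm_mul])
    _ ≤ √(∑ k, ‖phasePow (d k) w‖ ^ 2) * √(∑ k, ‖(U *ᵥ fun j => phasePow (x j) w) k‖ ^ 2) :=
        Real.sum_mul_le_sqrt_mul_sqrt _ _ _
    _ = _ := by
        simp only [sum_norm_sq_mulVec_of_mem_unitaryGroup hU, norm_phasePow _ hw,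
          hsq _ (norm_nonneg _)]

lemma norm_dotProduct_mulVec_le_of_mem_unitaryGroup [DecidableEq ι] {U : Matrix ι ι ℂ}
    (hU : U ∈ unitaryGroup ι ℂ) {c : ℝ} (hc : 0 ≤ c) (hUc : ∀ i j, ‖U i j‖ ≤ c) {p : ℝ}
    (hp1 : 1 ≤ p) (hp2 : p ≤ 2) (x d : ι → ℂ) :
    ‖d ⬝ᵥ (U *ᵥ x)‖ ≤
      c ^ (2 / p - 1) * (∑ j, ‖x j‖ ^ p) ^ (1 / p) * (∑ k, ‖d k‖ ^ p) ^ (1 / p) := by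
  set f : ℂ → ℂ := fun w => (fun k => phasePow (d k) w) ⬝ᵥ (U *ᵥ fun j => phasePow (x j) w)
  set A := ∑ j, ‖x j‖ ^ p
  set S := ∑ k, ‖d k‖ ^ p
  have hp : 0 < p := by linarith
  have hleft : ∀ w ∈ re ⁻¹' {p / 2}, ‖f w‖ ≤ √S * √A := fun w (hw : w.re = p / 2) => by
    simpa [hw, S, A, mul_div_cancel₀] using
      norm_phasePow_dotProduct_mulVec_le_sqrt_mul_sqrt hU x d (w := w) (by rw [hw]; positivity)
  have hright : ∀ w ∈ re ⁻¹' {p}, ‖f w‖ ≤ c * A * S := fun w (hw : w.re = p) => by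
    simpa [hw] using norm_phasePow_dotProduct_mulVec_le_mul_sum_mul_sum hUc x d
      (w := w) (by rw [hw]; positivity)
  have hbdd : BddAbove ((norm ∘ f) '' verticalClosedStrip (p / 2) p) := by
    refine ⟨∑ k, (‖d k‖ ^ (p / 2) + ‖d k‖ ^ p) *
      ∑ j, ‖U k j‖ * (‖x j‖ ^ (p / 2) + ‖x j‖ ^ p), ?_⟩
    rintro _ ⟨w, ⟨hw1, hw2⟩, rfl⟩
    refine (norm_phasePow_dotProduct_mulVec_le U x d (by linarith)).trans ?_
    gcongr with k _ j _ <;>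
      exact Real.rpow_le_rpow_add_rpow (norm_nonneg _) (by positivity) hw1 hw2
  have h1 : (1 : ℂ) ∈ verticalClosedStrip (p / 2) p := ⟨by rw [one_re]; linarith, by rw [one_re]; linarith⟩
  have hinterp := norm_le_interp_of_mem_verticalClosedStrip' (by linarith) h1
    (differentiable_phasePow_dotProduct_mulVec U x d).diffContOnCl hbdd hleft hright
  simp only [phasePow_one, one_re] at hinterp
  refine hinterp.trans_eq ?_
  have ht : (1 - p / 2) / (p - p / 2) = 2 / p - 1 := by field_simp; ring
  have hexp : 1 / 2 * (1 - (2 / p - 1)) + (2 / p - 1) = 1 / p := by field_simp; ring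
  have hA : 0 ≤ A := by positivity
  have hS : 0 ≤ S := by positivity
  rw [ht, ← Real.sqrt_mul hS, Real.sqrt_eq_rpow, ← Real.rpow_mul (by positivity), mul_assoc c,
    Real.mul_rpow hc (by positivity), mul_comm S A, mul_left_comm,
    ← Real.rpow_add' (by positivity) (by rw [hexp]; positivity), hexp, Real.mul_rpow hA hS,
    mul_assoc]

lemma sum_norm_mulVec_rpow_le_of_mem_unitaryGroup [DecidableEq ι] {U : Matrix ι ι ℂ}
    (hU : U ∈ unitaryGroup ι ℂ) {c : ℝ} (hc : 0 ≤ c) (hUc : ∀ i j, ‖U i j‖ ≤ c) {p q : ℝ}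
    (hpq : p.HolderConjugate q) (hp2 : p ≤ 2) (x : ι → ℂ) :
    (∑ k, ‖(U *ᵥ x) k‖ ^ q) ^ (1 / q) ≤ c ^ (1 / p - 1 / q) * (∑ j, ‖x j‖ ^ p) ^ (1 / p) := by
  set y := U *ᵥ x
  set B := ∑ k, ‖y k‖ ^ q
  have hq : 1 < q := hpq.symm.lt
  -- the Hölder dual of `y`
  set d : ι → ℂ := fun k => star (y k) * (‖y k‖ ^ (q - 2) : ℝ)
  have hdy : d ⬝ᵥ y = B := by
    simp only [d, B, dotProduct, ofReal_sum]
    refine sum_congr rfl fun k _ => ?_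
    rw [mul_right_comm, star_def, conj_mul', ← ofReal_pow, ← ofReal_mul, ← Real.rpow_natCast,
      ← Real.rpow_add' (norm_nonneg _) (by push_cast; linarith)]
    norm_num
  have hd : ∀ k, ‖d k‖ ^ p = ‖y k‖ ^ q := fun k => by
    rw [norm_mul, norm_star, norm_real, Real.norm_of_nonneg (by positivity),
      ← Real.rpow_one_add' (norm_nonneg _) (by linarith), ← Real.rpow_mul (norm_nonneg _)]
    congr 1
    linear_combination hpq.symm.sub_one_mul_conj
  have key := norm_dotProduct_mulVec_le_of_mem_unitaryGroup hU hc hUc hpq.lt.le hp2 x d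
  rw [hdy, norm_real, Real.norm_of_nonneg (by positivity), sum_congr rfl fun k _ => hd k] at key
  have hq' : 1 / q = 1 - 1 / p := by rw [one_div, one_div, hpq.one_sub_inv]
  rcases (show 0 ≤ B by positivity).eq_or_lt with hB | hB
  · rw [← hB, Real.zero_rpow (by positivity)]
    positivity
  · rw [hq', Real.rpow_sub hB, Real.rpow_one, div_le_iff₀ (by positivity)]
    rwa [show 1 / p - (1 - 1 / p) = 2 / p - 1 by ring]

end Matrix

lemma OrthonormalBasis.sum_norm_inner_rpow_le {𝕜 H ι : Type*} [RCLike 𝕜] [NormedAddCommGroup H]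
    [InnerProductSpace 𝕜 H] [Fintype ι] [DecidableEq ι] (τ ω : OrthonormalBasis ι 𝕜 H) {c : ℝ}
    (hc : 0 ≤ c) (hτω : ∀ j k, ‖⟪τ j, ω k⟫_𝕜‖ ≤ c) {p q : ℝ} (hpq : p.HolderConjugate q)
    (hp2 : p ≤ 2) (h : H) :
    (∑ k, ‖⟪h, ω k⟫_𝕜‖ ^ q) ^ (1 / q) ≤
      c ^ (1 / p - 1 / q) * (∑ j, ‖⟪h, τ j⟫_𝕜‖ ^ p) ^ (1 / p) := by
  set φ := RCLike.toComplexHom 𝕜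
  set U := (ω.toBasis.toMatrix τ.toBasis).map φ
  have hU : U ∈ unitaryGroup ι ℂ :=
    map_toComplexHom_mem_unitaryGroup (ω.toMatrix_orthonormalBasis_mem_unitary τ)
  have hUc : ∀ k j, ‖U k j‖ ≤ c := fun k j => by
    simpa [U, φ, Module.Basis.toMatrix_apply, OrthonormalBasis.repr_apply_apply, norm_inner_symm]
      using hτω j k
  have hy : (U *ᵥ fun j => φ (τ.toBasis.repr h j)) = fun k => φ (ω.toBasis.repr h k) := by
    ext k
    rw [← Module.Basis.toMatrix_mulVec_repr (b := τ.toBasis) (b' := ω.toBasis), RingHom.map_mulVec]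
    rfl
  have key := sum_norm_mulVec_rpow_le_of_mem_unitaryGroup hU hc hUc hpq hp2
    (fun j => φ (τ.toBasis.repr h j))
  rw [hy] at key
  simpa [φ, OrthonormalBasis.repr_apply_apply, norm_inner_symm] using key

lemma Real.hasDerivAt_const_rpow_of_nonneg {a x : ℝ} (ha : 0 ≤ a) (hx : x ≠ 0) :
    HasDerivAt (fun t => a ^ t) (a ^ x * Real.log a) x := by
  rcases ha.eq_or_lt with rfl | ha
  · rw [Real.log_zero, mul_zero]
    refine (hasDerivAt_const x (0 : ℝ)).congr_of_eventuallyEq ?_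
    filter_upwards [isOpen_ne.mem_nhds hx] with t ht using Real.zero_rpow ht
  · exact (Real.hasStrictDerivAt_const_rpow ha x).hasDerivAt

lemma HasDerivAt.nonpos_of_eventually_le_left {f : ℝ → ℝ} {f' x : ℝ} (hf : HasDerivAt f f' x)
    (hle : ∀ᶠ y in 𝓝[<] x, f x ≤ f y) : f' ≤ 0 := by
  have hslope := (hasDerivWithinAt_iff_tendsto_slope' (by simp : x ∉ Set.Iio x)).1
    hf.hasDerivWithinAt
  refine le_of_tendsto hslope ?_
  filter_upwards [hle, self_mem_nhdsWithin] with y hy (hyx : y < x)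
  rw [slope_def_field]
  exact div_nonpos_of_nonneg_of_nonpos (by linarith) (by linarith)

section SumRpow

variable {ι : Type*} [Fintype ι] {a : ι → ℝ}

lemma sum_rpow_pos_of_sum_sq_eq_one (ha : ∀ i, 0 ≤ a i) (h2 : ∑ i, a i ^ 2 = 1) (p : ℝ) :
    0 < ∑ i, a i ^ p := by
  obtain ⟨i, -, hi⟩ := exists_ne_zero_of_sum_ne_zero (h2.trans_ne one_ne_zero)
  exact sum_pos' (fun j _ => Real.rpow_nonneg (ha j) p)
    ⟨i, mem_univ i, Real.rpow_pos_of_pos ((ha i).lt_of_ne' (pow_ne_zero_iff two_ne_zero |>.1 hi)) p⟩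

lemma hasDerivAt_log_sum_rpow_div_two (ha : ∀ i, 0 ≤ a i) (h2 : ∑ i, a i ^ 2 = 1) :
    HasDerivAt (fun p : ℝ => Real.log (∑ i, a i ^ p) / p)
      ((∑ i, a i ^ 2 * Real.log (a i)) / 2) 2 := by
  have h2' : ∑ i, a i ^ (2 : ℝ) = 1 := by simpa only [Real.rpow_two] using h2
  have hsum : HasDerivAt (fun p : ℝ => ∑ i, a i ^ p) (∑ i, a i ^ 2 * Real.log (a i)) 2 := by
    simpa only [Real.rpow_two] using HasDerivAt.fun_sum fun i _ =>
      Real.hasDerivAt_const_rpow_of_nonneg (ha i) two_ne_zero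
  refine ((hsum.log (h2'.trans_ne one_ne_zero)).div (hasDerivAt_id 2) two_ne_zero).congr_deriv ?_
  rw [h2', Real.log_one]
  simp only [id]
  ring

end SumRpow

lemma Real.sq_mul_log_one_div_sq (x : ℝ) :
    x ^ 2 * Real.log (1 / x ^ 2) = -2 * (x ^ 2 * Real.log x) := by
  rw [one_div, Real.log_inv, Real.log_pow]
  push_cast
  ring

section Entropy

variable {ι κ : Type*} [Fintype ι] [Fintype κ] {a : ι → ℝ} {b : κ → ℝ} {c : ℝ}

lemma log_sum_rpow_div_le_of_rpow_sum_le (ha : ∀ i, 0 ≤ a i) (hb : ∀ k, 0 ≤ b k)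
    (ha2 : ∑ i, a i ^ 2 = 1) (hb2 : ∑ k, b k ^ 2 = 1) (hc : 0 < c)
    (hab : ∀ p q : ℝ, p.HolderConjugate q → p ≤ 2 →
      (∑ k, b k ^ q) ^ (1 / q) ≤ c ^ (1 / p - 1 / q) * (∑ i, a i ^ p) ^ (1 / p))
    {p : ℝ} (hp1 : 1 < p) (hp2 : p ≤ 2) :
    Real.log (∑ k, b k ^ (p / (p - 1))) / (p / (p - 1)) ≤
      (2 / p - 1) * Real.log c + Real.log (∑ i, a i ^ p) / p := by
  have hpq := Real.HolderConjugate.conjExponent hp1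
  have hq : 1 / Real.conjExponent p = 1 - 1 / p := by rw [one_div, one_div, hpq.one_sub_inv]
  have hA := sum_rpow_pos_of_sum_sq_eq_one ha ha2 p
  have hB := sum_rpow_pos_of_sum_sq_eq_one hb hb2 (Real.conjExponent p)
  have hlog := Real.log_le_log (by positivity) (hab p _ hpq hp2)
  rw [Real.log_mul (by positivity) (by positivity), Real.log_rpow hB, Real.log_rpow hc,
    Real.log_rpow hA, hq, show 1 / p - (1 - 1 / p) = 2 / p - 1 by ring] at hlog
  calc _ = (1 - 1 / p) * Real.log (∑ k, b k ^ Real.conjExponent p) := by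
        rw [← hq, Real.conjExponent]; ring
    _ ≤ _ := hlog
    _ = _ := by ring

lemma sum_sq_mul_log_one_div_sq_add_ge_of_rpow_sum_le (ha : ∀ i, 0 ≤ a i) (hb : ∀ k, 0 ≤ b k)
    (ha2 : ∑ i, a i ^ 2 = 1) (hb2 : ∑ k, b k ^ 2 = 1) (hc : 0 < c)
    (hab : ∀ p q : ℝ, p.HolderConjugate q → p ≤ 2 →
      (∑ k, b k ^ q) ^ (1 / q) ≤ c ^ (1 / p - 1 / q) * (∑ i, a i ^ p) ^ (1 / p)) :
    ∑ i, a i ^ 2 * Real.log (1 / a i ^ 2) + ∑ k, b k ^ 2 * Real.log (1 / b k ^ 2) ≥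
      -2 * Real.log c := by
  set F : ℝ → ℝ := fun p => (2 / p - 1) * Real.log c + Real.log (∑ i, a i ^ p) / p -
    Real.log (∑ k, b k ^ (p / (p - 1))) / (p / (p - 1))
  have hF : ∀ p ∈ Set.Ioo (1 : ℝ) 2, F 2 ≤ F p := fun p hp => by
    have h2 : F 2 = 0 := by norm_num [F, Real.rpow_two, ha2, hb2]
    rw [h2]
    simp only [F]
    linarith [log_sum_rpow_div_le_of_rpow_sum_le ha hb ha2 hb2 hc hab hp.1 hp.2.le]
  have hq : HasDerivAt (fun p : ℝ => p / (p - 1)) (-1) 2 := by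
    refine ((hasDerivAt_id 2).div ((hasDerivAt_id 2).sub_const 1) (by norm_num)).congr_deriv ?_
    norm_num
  have hlogc : HasDerivAt (fun p : ℝ => (2 / p - 1) * Real.log c) (-(1 / 2) * Real.log c) 2 := by
    refine ((((hasDerivAt_const (2 : ℝ) (2 : ℝ)).div (hasDerivAt_id (2 : ℝ))
      two_ne_zero).sub_const 1).mul_const (Real.log c)).congr_deriv ?_
    norm_num
  have hFd := (hlogc.add (hasDerivAt_log_sum_rpow_div_two ha ha2)).sub
    ((hasDerivAt_log_sum_rpow_div_two hb hb2).comp_of_eq 2 hq (by norm_num))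
  have hFd_nonpos := hFd.nonpos_of_eventually_le_left
    (eventually_of_mem (Ioo_mem_nhdsLT one_lt_two) hF)
  simp only [Real.sq_mul_log_one_div_sq, ← mul_sum]
  linarith

end Entropy

theorem maassen_uffink_general {𝕜 H : Type*} [RCLike 𝕜] [NormedAddCommGroup H]
    [InnerProductSpace 𝕜 H]
    {n : ℕ}
    (τ : OrthonormalBasis (Fin n) 𝕜 H) (ω : OrthonormalBasis (Fin n) 𝕜 H)
    (h : H) (hh : ‖h‖ = 1) :
    (∑ j, ‖(inner 𝕜 h (τ j) : 𝕜)‖ ^ 2 * Real.log (1 / ‖(inner 𝕜 h (τ j) : 𝕜)‖ ^ 2)) +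
      (∑ k, ‖(inner 𝕜 h (ω k) : 𝕜)‖ ^ 2 * Real.log (1 / ‖(inner 𝕜 h (ω k) : 𝕜)‖ ^ 2)) ≥
      -2 * Real.log (⨆ j, ⨆ k, ‖(inner 𝕜 (τ j) (ω k) : 𝕜)‖) := by
  set c := ⨆ j, ⨆ k, ‖(inner 𝕜 (τ j) (ω k) : 𝕜)‖
  have hτω : ∀ j k, ‖⟪τ j, ω k⟫_𝕜‖ ≤ c := fun j k =>
    (le_ciSup (f := fun k => ‖⟪τ j, ω k⟫_𝕜‖) (Set.finite_range _).bddAbove k).trans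
      (le_ciSup (f := fun j => ⨆ k, ‖⟪τ j, ω k⟫_𝕜‖) (Set.finite_range _).bddAbove j)
  have hτ : ∑ j, ‖⟪h, τ j⟫_𝕜‖ ^ 2 = 1 := by rw [τ.sum_sq_norm_inner_left, hh, one_pow]
  have hω : ∑ k, ‖⟪h, ω k⟫_𝕜‖ ^ 2 = 1 := by rw [ω.sum_sq_norm_inner_left, hh, one_pow]
  have hc : 0 < c := by
    obtain ⟨j, -, -⟩ := exists_ne_zero_of_sum_ne_zero (hτ.trans_ne one_ne_zero)
    obtain ⟨k, -, hk⟩ := exists_ne_zero_of_sum_ne_zero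
      ((ω.sum_sq_norm_inner_left (τ j)).trans_ne (by simp))
    exact ((norm_nonneg _).lt_of_ne' (pow_ne_zero_iff two_ne_zero |>.1 hk)).trans_le (hτω j k)
  exact sum_sq_mul_log_one_div_sq_add_ge_of_rpow_sum_le (fun _ => norm_nonneg _)
    (fun _ => norm_nonneg _) hτ hω hc
    fun p q hpq hp2 => τ.sum_norm_inner_rpow_le ω hc.le hτω hpq hp2 h

theorem maassen_uffink {𝕜 H : Type*} [RCLike 𝕜] [NormedAddCommGroup H]
    [InnerProductSpace 𝕜 H] [FiniteDimensional 𝕜 H]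
    {n : ℕ} (hn : 0 < n)
    (τ : OrthonormalBasis (Fin n) 𝕜 H) (ω : OrthonormalBasis (Fin n) 𝕜 H)
    (h : H) (hh : ‖h‖ = 1)
    (hhτ : ∀ j, (inner 𝕜 h (τ j) : 𝕜) ≠ 0) (hhω : ∀ k, (inner 𝕜 h (ω k) : 𝕜) ≠ 0) :
    (∑ j, ‖(inner 𝕜 h (τ j) : 𝕜)‖ ^ 2 * Real.log (1 / ‖(inner 𝕜 h (τ j) : 𝕜)‖ ^ 2)) +
      (∑ k, ‖(inner 𝕜 h (ω k) : 𝕜)‖ ^ 2 * Real.log (1 / ‖(inner 𝕜 h (ω k) : 𝕜)‖ ^ 2)) ≥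
      -2 * Real.log (⨆ j, ⨆ k, ‖(inner 𝕜 (τ j) (ω k) : 𝕜)‖) :=
  maassen_uffink_general τ ω h hh
end

section
/- Product implies sum lower bound: Let {τ_j}_{j=1}^n, {ω_k}_{k=1}^m be 1-bounded Parseval frames for a finite-dimensional Hilbert space H and φ : (0,1] → (0,∞) be continuous, decreasing, and submultiplicative. Then for every unit vector h with all frame coefficients nonzero, S_{τ,φ}(h) + S_{ω,φ}(h) ≥ 2 √(φ(((1 + max_{j,k}|⟨τ_j,ω_k⟩|)²)/4)). -/
/-!
Choosing unimodular phases α, β with α⟪h, u⟫ = ‖⟪h, u⟫‖ and β⟪h, v⟫ = ‖⟪h, v⟫‖ and testing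
h against αu + βv gives Deutsch's bound ‖⟪h, u⟫‖ ‖⟪h, v⟫‖ ≤ (1 + ‖⟪u, v⟫‖) / 2 for vectors of norm
at most one. Since φ is decreasing, each entropy is at least φ of the largest squared coefficient;
submultiplicativity and Deutsch's bound at the two maximizers give
φ((1 + μ)² / 4) ≤ S_τ(h) S_ω(h) with μ = maxⱼₖ ‖⟪τⱼ, ωₖ⟫‖, and AM–GM turns this product bound
into the sum bound.
-/

open Set
open scoped InnerProductSpace

section Deutsch

variable {𝕜 H : Type*} [RCLike 𝕜] [NormedAddCommGroup H] [InnerProductSpace 𝕜 H]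

theorem norm_inner_le_one {u v : H} (hu : ‖u‖ ≤ 1) (hv : ‖v‖ ≤ 1) : ‖⟪u, v⟫_𝕜‖ ≤ 1 :=
  (norm_inner_le_norm u v).trans (mul_le_one₀ hu (norm_nonneg v) hv)

theorem sq_norm_inner_mem_Ioc {u v : H} (hu : ‖u‖ ≤ 1) (hv : ‖v‖ ≤ 1) (huv : ⟪u, v⟫_𝕜 ≠ 0) :
    ‖⟪u, v⟫_𝕜‖ ^ 2 ∈ Ioc (0 : ℝ) 1 :=
  ⟨by positivity, pow_le_one₀ (norm_nonneg _) (norm_inner_le_one hu hv)⟩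

theorem norm_inner_add_norm_inner_sq_le {h u v : H} (hh : ‖h‖ ≤ 1) (hu : ‖u‖ ≤ 1)
    (hv : ‖v‖ ≤ 1) : (‖⟪h, u⟫_𝕜‖ + ‖⟪h, v⟫_𝕜‖) ^ 2 ≤ 2 * (1 + ‖⟪u, v⟫_𝕜‖) := by
  obtain ⟨α, hα, hαu⟩ := RCLike.exists_norm_eq_mul_self ⟪h, u⟫_𝕜
  obtain ⟨β, hβ, hβv⟩ := RCLike.exists_norm_eq_mul_self ⟪h, v⟫_𝕜
  have hw : ‖⟪h, u⟫_𝕜‖ + ‖⟪h, v⟫_𝕜‖ ≤ ‖α • u + β • v‖ :=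
    calc ‖⟪h, u⟫_𝕜‖ + ‖⟪h, v⟫_𝕜‖ = ‖⟪h, α • u + β • v⟫_𝕜‖ := by
          rw [inner_add_right, inner_smul_right, inner_smul_right, ← hαu, ← hβv,
            ← RCLike.ofReal_add, RCLike.norm_ofReal, abs_of_nonneg (by positivity)]
      _ ≤ ‖h‖ * ‖α • u + β • v‖ := norm_inner_le_norm _ _
      _ ≤ ‖α • u + β • v‖ := mul_le_of_le_one_left (norm_nonneg _) hh
  have hcross : RCLike.re ⟪α • u, β • v⟫_𝕜 ≤ ‖⟪u, v⟫_𝕜‖ := by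
    refine (RCLike.re_le_norm _).trans_eq ?_
    rw [inner_smul_left, inner_smul_right, norm_mul, norm_mul, RCLike.norm_conj, hα, hβ,
      one_mul, one_mul]
  have hexpand := norm_add_sq (𝕜 := 𝕜) (α • u) (β • v)
  rw [norm_smul, norm_smul, hα, hβ, one_mul, one_mul] at hexpand
  calc (‖⟪h, u⟫_𝕜‖ + ‖⟪h, v⟫_𝕜‖) ^ 2 ≤ ‖α • u + β • v‖ ^ 2 := by gcongr
    _ ≤ 2 * (1 + ‖⟪u, v⟫_𝕜‖) := by
      rw [hexpand]
      nlinarith [norm_nonneg u, norm_nonneg v]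

theorem norm_inner_mul_norm_inner_le_s12 {h u v : H} (hh : ‖h‖ ≤ 1) (hu : ‖u‖ ≤ 1)
    (hv : ‖v‖ ≤ 1) : ‖⟪h, u⟫_𝕜‖ * ‖⟪h, v⟫_𝕜‖ ≤ (1 + ‖⟪u, v⟫_𝕜‖) / 2 := by
  nlinarith [four_mul_le_sq_add ‖⟪h, u⟫_𝕜‖ ‖⟪h, v⟫_𝕜‖,
    norm_inner_add_norm_inner_sq_le (𝕜 := 𝕜) hh hu hv]

end Deutsch

section Entropy

variable {ι κ : Type*} [Fintype ι] [Fintype κ]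

/-- The paper's `S_{τ,φ}(h)` is `phiEntropy φ (fun j => ‖⟪h, τ j⟫‖ ^ 2)`. -/
def phiEntropy (φ : ℝ → ℝ) (p : ι → ℝ) : ℝ :=
  ∑ i, p i * φ (p i)

theorem phiEntropy_nonneg {φ : ℝ → ℝ} {p : ι → ℝ} (hp : ∀ i, 0 ≤ p i)
    (hφ : ∀ i, 0 ≤ φ (p i)) : 0 ≤ phiEntropy φ p :=
  Finset.sum_nonneg fun i _ => mul_nonneg (hp i) (hφ i)

theorem AntitoneOn.apply_le_phiEntropy {φ : ℝ → ℝ} {s : Set ℝ} (hφ : AntitoneOn φ s)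
    {p : ι → ℝ} (hps : ∀ i, p i ∈ s) (hp : ∀ i, 0 ≤ p i) (hsum : ∑ i, p i = 1) {i₀ : ι}
    (hi₀ : ∀ i, p i ≤ p i₀) : φ (p i₀) ≤ phiEntropy φ p :=
  calc φ (p i₀) = ∑ i, p i * φ (p i₀) := by rw [← Finset.sum_mul, hsum, one_mul]
    _ ≤ phiEntropy φ p :=
      Finset.sum_le_sum fun i _ => mul_le_mul_of_nonneg_left (hφ (hps i) (hps i₀) (hi₀ i)) (hp i)

theorem apply_le_phiEntropy_mul_phiEntropy {φ : ℝ → ℝ} (hφdec : AntitoneOn φ (Ioc 0 1))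
    (hφ0 : ∀ x ∈ Ioc (0 : ℝ) 1, 0 ≤ φ x)
    (hφsub : ∀ x ∈ Ioc (0 : ℝ) 1, ∀ y ∈ Ioc (0 : ℝ) 1, φ (x * y) ≤ φ x * φ y)
    {p : ι → ℝ} {q : κ → ℝ} (hp : ∀ i, p i ∈ Ioc 0 1) (hq : ∀ k, q k ∈ Ioc 0 1)
    (hpsum : ∑ i, p i = 1) (hqsum : ∑ k, q k = 1) {B : ℝ} (hB : B ∈ Ioc 0 1)
    (hpq : ∀ i k, p i * q k ≤ B) : φ B ≤ phiEntropy φ p * phiEntropy φ q := by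
  have : Nonempty ι := Finset.univ_nonempty_iff.mp <| Finset.nonempty_of_sum_ne_zero <| by
    rw [hpsum]; exact one_ne_zero
  have : Nonempty κ := Finset.univ_nonempty_iff.mp <| Finset.nonempty_of_sum_ne_zero <| by
    rw [hqsum]; exact one_ne_zero
  obtain ⟨i₀, hi₀⟩ := Finite.exists_max p
  obtain ⟨k₀, hk₀⟩ := Finite.exists_max q
  have hSp := hφdec.apply_le_phiEntropy hp (fun i => (hp i).1.le) hpsum hi₀
  have hSq := hφdec.apply_le_phiEntropy hq (fun k => (hq k).1.le) hqsum hk₀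
  have hpq₀ : p i₀ * q k₀ ∈ Ioc (0 : ℝ) 1 :=
    ⟨mul_pos (hp i₀).1 (hq k₀).1, mul_le_one₀ (hp i₀).2 (hq k₀).1.le (hq k₀).2⟩
  calc φ B ≤ φ (p i₀ * q k₀) := hφdec hpq₀ hB (hpq i₀ k₀)
    _ ≤ φ (p i₀) * φ (q k₀) := hφsub _ (hp i₀) _ (hq k₀)
    _ ≤ phiEntropy φ p * phiEntropy φ q :=
      mul_le_mul hSp hSq (hφ0 _ (hq k₀)) ((hφ0 _ (hp i₀)).trans hSp)

end Entropy

theorem two_mul_sqrt_le_add_of_le_mul {a b x : ℝ} (ha : 0 ≤ a) (hb : 0 ≤ b) (hx : x ≤ a * b) :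
    2 * √x ≤ a + b :=
  calc 2 * √x ≤ 2 * √a * √b := by rw [mul_assoc, ← Real.sqrt_mul ha]; gcongr
    _ ≤ √a ^ 2 + √b ^ 2 := two_mul_le_add_sq _ _
    _ = a + b := by rw [Real.sq_sqrt ha, Real.sq_sqrt hb]

theorem sum_entropic_uncertainty_general {𝕜 H : Type*} [RCLike 𝕜] [NormedAddCommGroup H]
    [InnerProductSpace 𝕜 H]
    {n m : ℕ}
    (τ : Fin n → H) (ω : Fin m → H)
    (hτ : ∀ x : H, ‖x‖ ^ 2 = ∑ j, ‖(inner 𝕜 x (τ j) : 𝕜)‖ ^ 2)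
    (hω : ∀ x : H, ‖x‖ ^ 2 = ∑ k, ‖(inner 𝕜 x (ω k) : 𝕜)‖ ^ 2)
    (hτ1 : ∀ j, ‖τ j‖ ≤ 1) (hω1 : ∀ k, ‖ω k‖ ≤ 1)
    (φ : ℝ → ℝ)
    (hφpos : ∀ x ∈ Set.Ioc (0:ℝ) 1, 0 < φ x)
    (hφdec : ∀ x ∈ Set.Ioc (0:ℝ) 1, ∀ y ∈ Set.Ioc (0:ℝ) 1, x ≤ y → φ y ≤ φ x)
    (hφsub : ∀ x ∈ Set.Ioc (0:ℝ) 1, ∀ y ∈ Set.Ioc (0:ℝ) 1, φ (x * y) ≤ φ x * φ y)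
    (h : H) (hh : ‖h‖ = 1)
    (hhτ : ∀ j, (inner 𝕜 h (τ j) : 𝕜) ≠ 0) (hhω : ∀ k, (inner 𝕜 h (ω k) : 𝕜) ≠ 0) :
    (∑ j, ‖(inner 𝕜 h (τ j) : 𝕜)‖ ^ 2 * φ (‖(inner 𝕜 h (τ j) : 𝕜)‖ ^ 2)) +
      (∑ k, ‖(inner 𝕜 h (ω k) : 𝕜)‖ ^ 2 * φ (‖(inner 𝕜 h (ω k) : 𝕜)‖ ^ 2)) ≥
      2 * Real.sqrt (φ ((1 + ⨆ j, ⨆ k, ‖(inner 𝕜 (τ j) (ω k) : 𝕜)‖) ^ 2 / 4)) := by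
  set μ := ⨆ j, ⨆ k, ‖⟪τ j, ω k⟫_𝕜‖
  have hμ (j k) : ‖⟪τ j, ω k⟫_𝕜‖ ≤ μ :=
    le_ciSup_of_le (Set.finite_range _).bddAbove j
      (le_ciSup (f := fun k => ‖⟪τ j, ω k⟫_𝕜‖) (Set.finite_range _).bddAbove k)
  have hμ0 : 0 ≤ μ := Real.iSup_nonneg fun j => Real.iSup_nonneg fun k => norm_nonneg _
  have hμ1 : μ ≤ 1 := Real.iSup_le (fun j => Real.iSup_le
    (fun k => norm_inner_le_one (hτ1 j) (hω1 k)) zero_le_one) zero_le_one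
  have hcd (j k) : ‖⟪h, τ j⟫_𝕜‖ ^ 2 * ‖⟪h, ω k⟫_𝕜‖ ^ 2 ≤ (1 + μ) ^ 2 / 4 := by
    have := norm_inner_mul_norm_inner_le_s12 (𝕜 := 𝕜) hh.le (hτ1 j) (hω1 k)
    calc _ = (‖⟪h, τ j⟫_𝕜‖ * ‖⟪h, ω k⟫_𝕜‖) ^ 2 := by ring
      _ ≤ ((1 + μ) / 2) ^ 2 := by gcongr; linarith [hμ j k]
      _ = (1 + μ) ^ 2 / 4 := by ring
  have hB : (1 + μ) ^ 2 / 4 ∈ Ioc (0 : ℝ) 1 := ⟨by positivity, by nlinarith⟩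
  have hφ0 (x) (hx : x ∈ Ioc (0 : ℝ) 1) : 0 ≤ φ x := (hφpos x hx).le
  have hc (j) := sq_norm_inner_mem_Ioc hh.le (hτ1 j) (hhτ j)
  have hd (k) := sq_norm_inner_mem_Ioc hh.le (hω1 k) (hhω k)
  exact two_mul_sqrt_le_add_of_le_mul
    (phiEntropy_nonneg (fun j => (hc j).1.le) fun j => hφ0 _ (hc j))
    (phiEntropy_nonneg (fun k => (hd k).1.le) fun k => hφ0 _ (hd k))
    (apply_le_phiEntropy_mul_phiEntropy hφdec hφ0 hφsub hc hd
      (by rw [← hτ h, hh, one_pow]) (by rw [← hω h, hh, one_pow]) hB hcd)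

theorem sum_entropic_uncertainty {𝕜 H : Type*} [RCLike 𝕜] [NormedAddCommGroup H]
    [InnerProductSpace 𝕜 H] [FiniteDimensional 𝕜 H]
    {n m : ℕ} (hn : 0 < n) (hm : 0 < m)
    (τ : Fin n → H) (ω : Fin m → H)
    (hτ : ∀ x : H, ‖x‖ ^ 2 = ∑ j, ‖(inner 𝕜 x (τ j) : 𝕜)‖ ^ 2)
    (hω : ∀ x : H, ‖x‖ ^ 2 = ∑ k, ‖(inner 𝕜 x (ω k) : 𝕜)‖ ^ 2)
    (hτ1 : ∀ j, ‖τ j‖ ≤ 1) (hω1 : ∀ k, ‖ω k‖ ≤ 1)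
    (φ : ℝ → ℝ)
    (hφc : ContinuousOn φ (Set.Ioc 0 1))
    (hφpos : ∀ x ∈ Set.Ioc (0:ℝ) 1, 0 < φ x)
    (hφdec : ∀ x ∈ Set.Ioc (0:ℝ) 1, ∀ y ∈ Set.Ioc (0:ℝ) 1, x ≤ y → φ y ≤ φ x)
    (hφsub : ∀ x ∈ Set.Ioc (0:ℝ) 1, ∀ y ∈ Set.Ioc (0:ℝ) 1, φ (x * y) ≤ φ x * φ y)
    (h : H) (hh : ‖h‖ = 1)
    (hhτ : ∀ j, (inner 𝕜 h (τ j) : 𝕜) ≠ 0) (hhω : ∀ k, (inner 𝕜 h (ω k) : 𝕜) ≠ 0) :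
    (∑ j, ‖(inner 𝕜 h (τ j) : 𝕜)‖ ^ 2 * φ (‖(inner 𝕜 h (τ j) : 𝕜)‖ ^ 2)) +
      (∑ k, ‖(inner 𝕜 h (ω k) : 𝕜)‖ ^ 2 * φ (‖(inner 𝕜 h (ω k) : 𝕜)‖ ^ 2)) ≥
      2 * Real.sqrt (φ ((1 + ⨆ j, ⨆ k, ‖(inner 𝕜 (τ j) (ω k) : 𝕜)‖) ^ 2 / 4)) :=
  sum_entropic_uncertainty_general τ ω hτ hω hτ1 hω1 φ hφpos hφdec hφsub h hh hhτ hhω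
end
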